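/- arXiv:1709.02223 — 4 statements merged into one kernel-verified Lean document; each statement's English description precedes it below -/
import Mathlib

section
/- Let d_1, …, d_n be real m×p matrices and Q_1, …, Q_n be symmetric positive definite m×m matrices. Define Ψ = Σ_k d_kᵀ d_k, Ξ = Σ_k d_kᵀ Q_k d_k, and N = Σ_k d_kᵀ Q_k⁻¹ d_k. Then for every ξ ∈ ℝ^p, (ξᵀ Ψ Ξ⁻¹ Ψ ξ) ≤ ξᵀ N ξ whenever Ξ is invertible; equivalently, the matrix N − Ψ Ξ⁻¹ Ψ is positive semidefinite. -/
/-!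
For each `k` the block matrix `[[Q k, 1], [1, (Q k)⁻¹]]` is positive semidefinite, its Schur
complement `(Q k)⁻¹ - 1 * (Q k)⁻¹ * 1` being zero. Conjugating by `diag (d k, d k)` and summing
over `k` shows that `[[Ξ, Ψ], [Ψ, N]]` is positive semidefinite. Since `Ξ` is positive
semidefinite and invertible it is positive definite, so the Schur complement `N - Ψ * Ξ⁻¹ * Ψ`
is positive semidefinite.
-/

open Matrix BigOperators Finset

namespace Matrix

variable {ι l m n o 𝕜 : Type*}

theorem fromBlocks_sum [AddCommMonoid 𝕜] (s : Finset ι) (A : ι → Matrix n l 𝕜)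
    (B : ι → Matrix n m 𝕜) (C : ι → Matrix o l 𝕜) (D : ι → Matrix o m 𝕜) :
    fromBlocks (∑ i ∈ s, A i) (∑ i ∈ s, B i) (∑ i ∈ s, C i) (∑ i ∈ s, D i) =
      ∑ i ∈ s, fromBlocks (A i) (B i) (C i) (D i) := by
  ext (_ | _) (_ | _) <;> simp [sum_apply]

theorem conjTranspose_fromBlocks_diag_mul_mul [Fintype l] [Fintype m]
    [NonUnitalNonAssocSemiring 𝕜] [StarRing 𝕜] (d : Matrix l n 𝕜) (e : Matrix m o 𝕜)
    (A : Matrix l l 𝕜) (B : Matrix l m 𝕜) (C : Matrix m l 𝕜) (D : Matrix m m 𝕜) :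
    (fromBlocks d 0 0 e)ᴴ * fromBlocks A B C D * fromBlocks d 0 0 e =
      fromBlocks (dᴴ * A * d) (dᴴ * B * e) (eᴴ * C * d) (eᴴ * D * e) := by
  simp [fromBlocks_conjTranspose, fromBlocks_multiply]

open scoped ComplexOrder

variable [RCLike 𝕜] [Fintype m] [DecidableEq m] [Fintype n]

theorem PosDef.posSemidef_fromBlocks_one_one_inv {Q : Matrix m m 𝕜} (hQ : Q.PosDef) :
    (fromBlocks Q 1 1 Q⁻¹).PosSemidef := by
  have := hQ.isUnit.invertible
  simpa using (PosDef.fromBlocks₁₁ 1 Q⁻¹ hQ).2 (by simpa using PosSemidef.zero)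

theorem posSemidef_fromBlocks_sum_conjTranspose_mul_mul (s : Finset ι) (d : ι → Matrix m n 𝕜)
    {Q : ι → Matrix m m 𝕜} (hQ : ∀ i ∈ s, (Q i).PosDef) :
    (fromBlocks (∑ i ∈ s, (d i)ᴴ * Q i * d i) (∑ i ∈ s, (d i)ᴴ * d i)
      (∑ i ∈ s, (d i)ᴴ * d i) (∑ i ∈ s, (d i)ᴴ * (Q i)⁻¹ * d i)).PosSemidef := by
  rw [fromBlocks_sum]
  refine posSemidef_sum s fun i hi => ?_
  simpa [conjTranspose_fromBlocks_diag_mul_mul] using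
    (hQ i hi).posSemidef_fromBlocks_one_one_inv.conjTranspose_mul_mul_same
      (fromBlocks (d i) 0 0 (d i))

theorem posSemidef_sum_conj_inv_sub [DecidableEq n] (s : Finset ι) (d : ι → Matrix m n 𝕜)
    {Q : ι → Matrix m m 𝕜} (hQ : ∀ i ∈ s, (Q i).PosDef)
    (hΞ : IsUnit (∑ i ∈ s, (d i)ᴴ * Q i * d i)) :
    (∑ i ∈ s, (d i)ᴴ * (Q i)⁻¹ * d i - (∑ i ∈ s, (d i)ᴴ * d i) *
      (∑ i ∈ s, (d i)ᴴ * Q i * d i)⁻¹ * (∑ i ∈ s, (d i)ᴴ * d i)).PosSemidef := by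
  have hΞpos : (∑ i ∈ s, (d i)ᴴ * Q i * d i).PosDef :=
    (posSemidef_sum s fun i hi => (hQ i hi).posSemidef.conjTranspose_mul_mul_same (d i))
      |>.posDef_iff_isUnit.2 hΞ
  have := hΞ.invertible
  have hΨ : (∑ i ∈ s, (d i)ᴴ * d i)ᴴ = ∑ i ∈ s, (d i)ᴴ * d i := by
    simp [conjTranspose_sum]
  have hSchur := (hΞpos.fromBlocks₁₁ (∑ i ∈ s, (d i)ᴴ * d i)
    (∑ i ∈ s, (d i)ᴴ * (Q i)⁻¹ * d i)).1
  rw [hΨ] at hSchur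
  exact hSchur (posSemidef_fromBlocks_sum_conjTranspose_mul_mul s d hQ)

end Matrix

/-- For matrices `d k : m × p` and symmetric positive definite `Q k : m × m`,
with `Ψ = Σ dᵀd`, `Ξ = Σ dᵀ Q d`, `N = Σ dᵀ Q⁻¹ d`, if `Ξ` is invertible then
`N − Ψ Ξ⁻¹ Ψ` is positive semidefinite. -/
theorem smce_vs_mce_key_ineq {n m p : ℕ}
    (d : Fin n → Matrix (Fin m) (Fin p) ℝ)
    (Q : Fin n → Matrix (Fin m) (Fin m) ℝ)
    (hQ : ∀ k, (Q k).PosDef)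
    (Ψ Ξ N : Matrix (Fin p) (Fin p) ℝ)
    (hΨ : Ψ = ∑ k, (d k)ᵀ * d k)
    (hΞ : Ξ = ∑ k, (d k)ᵀ * Q k * d k)
    (hN : N = ∑ k, (d k)ᵀ * (Q k)⁻¹ * d k)
    (hΞinv : IsUnit Ξ.det) :
    (N - Ψ * Ξ⁻¹ * Ψ).PosSemidef := by
  subst hΨ hΞ hN
  simpa only [conjTranspose_eq_transpose_of_trivial] using
    posSemidef_sum_conj_inv_sub univ d (fun k _ => hQ k)
      (by simpa only [conjTranspose_eq_transpose_of_trivial, isUnit_iff_isUnit_det] using hΞinv)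
end

section
/- Let Q_1, …, Q_n be symmetric m×m matrices satisfying c·Id ⪯ Q_k ⪯ C·Id for constants 0 < c ≤ C, and let d_1, …, d_n be m×k matrices with Ψ := Σ_k d_kᵀ d_k invertible. Define M := (Σ_k d_kᵀ Q_k⁻¹ d_k)⁻¹ and M̃ := Ψ⁻¹ (Σ_k d_kᵀ Q_k d_k) Ψ⁻¹. Then M̃ − M is positive semidefinite. -/
/-!
Put `e j := d j * Ψ⁻¹`, so that `∑ (e j)ᵀ * d j = 1` and `M̃ = ∑ (e j)ᵀ * Q j * e j`. Each block
matrix `[eᵀ Q e, eᵀ d; dᵀ e, dᵀ Q⁻¹ d]` is a congruence transform of `[Q, 1; 1, Q⁻¹]`, whose Schur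
complement vanishes, so it is positive semidefinite (weighted Cauchy–Schwarz). Summing over `j`
gives `[M̃, 1; 1, M⁻¹] ⪰ 0`. The corner `M⁻¹` is positive definite because the `d j` have the joint
left inverse `e`, and its Schur complement is `M̃ - M`.
-/

open Matrix

namespace Matrix

lemma PosSemidef.posDef_of_sub_smul_one {m K : Type*} [DecidableEq m] [Field K] [PartialOrder K]
    [StarRing K] [StarOrderedRing K] {A : Matrix m m K} {c : K} (hc : 0 < c)
    (h : (A - c • (1 : Matrix m m K)).PosSemidef) : A.PosDef := by
  simpa using PosDef.posSemidef_add h ((PosDef.one (R := K)).smul hc)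

lemma sum_fromBlocks {ι l m n o R : Type*} [Fintype ι] [AddCommMonoid R]
    (A : ι → Matrix n l R) (B : ι → Matrix n m R) (C : ι → Matrix o l R)
    (D : ι → Matrix o m R) :
    ∑ j, fromBlocks (A j) (B j) (C j) (D j) =
      fromBlocks (∑ j, A j) (∑ j, B j) (∑ j, C j) (∑ j, D j) := by
  ext (i | i) (l | l) <;> simp [Matrix.sum_apply]

variable {ι m k K : Type*} [Fintype ι] [Fintype m] [Fintype k]
  [Field K] [PartialOrder K] [StarRing K] [StarOrderedRing K]

lemma posDef_sum_conjTranspose_mul_mul [DecidableEq k] {P : ι → Matrix m m K}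
    (hP : ∀ j, (P j).PosDef) {e d : ι → Matrix m k K} (hed : ∑ j, (e j)ᴴ * d j = 1) :
    (∑ j, (d j)ᴴ * P j * d j).PosDef := by
  refine PosDef.of_dotProduct_mulVec_pos ?_ fun x hx => ?_
  · exact (posSemidef_sum Finset.univ fun j _ =>
      (hP j).posSemidef.conjTranspose_mul_mul_same (d j)).isHermitian
  obtain ⟨j₀, hj₀⟩ : ∃ j, d j *ᵥ x ≠ 0 := by
    by_contra! h
    apply hx
    simpa [← hed, Matrix.sum_mulVec, ← mulVec_mulVec, h] using (one_mulVec x).symm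
  have hterm (j : ι) :
      star x ⬝ᵥ ((d j)ᴴ * P j * d j) *ᵥ x = star (d j *ᵥ x) ⬝ᵥ P j *ᵥ (d j *ᵥ x) := by
    simp [← mulVec_mulVec, dotProduct_mulVec, star_mulVec, vecMul_vecMul]
  rw [sum_mulVec, dotProduct_sum]
  simp only [hterm]
  exact Finset.sum_pos' (fun j _ => (hP j).posSemidef.dotProduct_mulVec_nonneg _)
    ⟨j₀, Finset.mem_univ _, (hP j₀).dotProduct_mulVec_pos hj₀⟩

variable [DecidableEq m]

lemma PosDef.posSemidef_fromBlocks_one_one_inv_s12 {P : Matrix m m K} (hP : P.PosDef) :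
    (fromBlocks P 1 1 P⁻¹).PosSemidef := by
  have := hP.isUnit.invertible
  have := hP.inv.isUnit.invertible
  have hSchur := (PosDef.fromBlocks₂₂ P 1 hP.inv).2
  simp only [conjTranspose_one, one_mul, mul_one, inv_inv_of_invertible, sub_self] at hSchur
  exact hSchur .zero

lemma PosDef.posSemidef_fromBlocks_conjTranspose_mul_mul {P : Matrix m m K} (hP : P.PosDef)
    (E D : Matrix m k K) :
    (fromBlocks (Eᴴ * P * E) (Eᴴ * D) (Dᴴ * E) (Dᴴ * P⁻¹ * D)).PosSemidef := by
  have := hP.posSemidef_fromBlocks_one_one_inv_s12.conjTranspose_mul_mul_same (fromBlocks E 0 0 D)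
  simpa [fromBlocks_conjTranspose, fromBlocks_multiply, Matrix.mul_assoc] using this

theorem posSemidef_sum_conjTranspose_mul_mul_sub_inv [DecidableEq k] {P : ι → Matrix m m K}
    (hP : ∀ j, (P j).PosDef) {e d : ι → Matrix m k K} (hed : ∑ j, (e j)ᴴ * d j = 1) :
    (∑ j, (e j)ᴴ * P j * e j - (∑ j, (d j)ᴴ * (P j)⁻¹ * d j)⁻¹).PosSemidef := by
  have hA := posDef_sum_conjTranspose_mul_mul (fun j => (hP j).inv) hed
  have := hA.isUnit.invertible
  have hde : ∑ j, (d j)ᴴ * e j = 1 := by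
    simpa [conjTranspose_sum] using congr_arg conjTranspose hed
  have hblock := posSemidef_sum Finset.univ fun j _ =>
    (hP j).posSemidef_fromBlocks_conjTranspose_mul_mul (e j) (d j)
  rw [sum_fromBlocks, hed, hde] at hblock
  have hSchur := (PosDef.fromBlocks₂₂ _ 1 hA).1 (by rwa [conjTranspose_one])
  rw [conjTranspose_one] at hSchur
  simpa using hSchur

end Matrix

theorem smce_covariance_ge_mce_general {n m k : ℕ} (c : ℝ) (hc : 0 < c)
    (Q : Fin n → Matrix (Fin m) (Fin m) ℝ)
    (hQlb : ∀ j, (Q j - c • (1 : Matrix (Fin m) (Fin m) ℝ)).PosSemidef)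
    (d : Fin n → Matrix (Fin m) (Fin k) ℝ)
    (hΨ : IsUnit (∑ j, (d j)ᵀ * d j).det) :
    ((∑ j, (d j)ᵀ * d j)⁻¹ * (∑ j, (d j)ᵀ * Q j * d j) * (∑ j, (d j)ᵀ * d j)⁻¹ -
      (∑ j, (d j)ᵀ * (Q j)⁻¹ * d j)⁻¹).PosSemidef := by
  set Ψ := ∑ j, (d j)ᵀ * d j
  have hΨinv : (Ψ⁻¹)ᵀ = Ψ⁻¹ := by
    simp [Ψ, transpose_nonsing_inv, transpose_sum, transpose_mul]
  have hleft : ∑ j, (d j * Ψ⁻¹)ᴴ * d j = 1 := by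
    simpa [transpose_mul, hΨinv, Matrix.mul_assoc, ← Finset.mul_sum] using nonsing_inv_mul _ hΨ
  have hM := posSemidef_sum_conjTranspose_mul_mul_sub_inv
    (fun j => (hQlb j).posDef_of_sub_smul_one hc) hleft
  simp only [conjTranspose_eq_transpose_of_trivial, transpose_mul, hΨinv] at hM
  rw [Finset.mul_sum, Finset.sum_mul]
  simpa only [Matrix.mul_assoc] using hM

/-- Covariance comparison between the SMCE and the MCE: with
`c·Id ⪯ Q k ⪯ C·Id`, `Ψ = Σ d kᵀ d k` invertible, `M = (Σ d kᵀ Q k⁻¹ d k)⁻¹` and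
`M̃ = Ψ⁻¹ (Σ d kᵀ Q k d k) Ψ⁻¹`, the matrix `M̃ − M` is positive semidefinite. -/
theorem smce_covariance_ge_mce {n m k : ℕ} (c C : ℝ) (hc : 0 < c) (hcC : c ≤ C)
    (Q : Fin n → Matrix (Fin m) (Fin m) ℝ)
    (hQsymm : ∀ j, (Q j).IsSymm)
    (hQlb : ∀ j, (Q j - c • (1 : Matrix (Fin m) (Fin m) ℝ)).PosSemidef)
    (hQub : ∀ j, (C • (1 : Matrix (Fin m) (Fin m) ℝ) - Q j).PosSemidef)
    (d : Fin n → Matrix (Fin m) (Fin k) ℝ)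
    (hΨ : IsUnit (∑ j, (d j)ᵀ * d j).det) :
    ((∑ j, (d j)ᵀ * d j)⁻¹ * (∑ j, (d j)ᵀ * Q j * d j) * (∑ j, (d j)ᵀ * d j)⁻¹ -
      (∑ j, (d j)ᵀ * (Q j)⁻¹ * d j)⁻¹).PosSemidef :=
  smce_covariance_ge_mce_general c hc Q hQlb d hΨ
end

section
/- Let q : [0,T] → ℝ^{m×m} be continuous with each q(t) symmetric positive definite, and let g : [0,T] → ℝ^{m×k} be continuous. Define Ψ̌ := ∫_0^T g(s)ᵀ g(s) ds, Ξ̌ := ∫_0^T g(s)ᵀ q(s) g(s) ds, and Ň := ∫_0^T g(s)ᵀ q(s)⁻¹ g(s) ds. If Ψ̌ is invertible, then Ň − Ψ̌ Ξ̌⁻¹ Ψ̌ is positive semidefinite. -/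
/-!
Completing the square pointwise, `(g x)ᵀ q⁻¹ (g x) - 2 (g y)ᵀ (g x) + (g y)ᵀ q (g y)` is the
value of the form `q` at `q⁻¹ g x - g y`, hence nonnegative. Integrating over `[0, T]` gives
`xᵀ Ň x - 2 yᵀ Ψ̌ x + yᵀ Ξ̌ y ≥ 0` for all `x, y`, and the choice `y = Ξ̌⁻¹ Ψ̌ x` turns this into
`xᵀ (Ň - Ψ̌ Ξ̌⁻¹ Ψ̌) x ≥ 0`.
-/

open Matrix Set intervalIntegral

attribute [local instance] Matrix.frobeniusNormedAddCommGroup Matrix.frobeniusNormedSpace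

open MeasureTheory

-- The Frobenius topology agrees with the product topology on matrices only up to unfolding, so
-- instance search cannot find this structure, which interval integrability needs.
noncomputable abbrev Matrix.frobeniusENormedAddMonoid {m n : Type*} [Fintype m] [Fintype n] :
    ENormedAddMonoid (Matrix m n ℝ) :=
  @NormedAddGroup.toENormedAddMonoid _ Matrix.frobeniusNormedAddCommGroup.toNormedAddGroup

attribute [local instance] Matrix.frobeniusENormedAddMonoid

namespace Matrix

variable {l m n : Type*} [Fintype m] [Fintype n]

theorem _root_.ContinuousOn.matrix_inv {X 𝕜 : Type*} [TopologicalSpace X] [Field 𝕜]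
    [TopologicalSpace 𝕜] [IsTopologicalRing 𝕜] [ContinuousInv₀ 𝕜] [DecidableEq n]
    {A : X → Matrix n n 𝕜} {s : Set X} (hA : ContinuousOn A s) (hdet : ∀ x ∈ s, (A x).det ≠ 0) :
    ContinuousOn (fun x => (A x)⁻¹) s := by
  intro x hx
  have hinv : ContinuousAt Ring.inverse (A x).det := by
    rw [Ring.inverse_eq_inv']
    exact continuousAt_inv₀ (hdet x hx)
  exact (continuousAt_matrix_inv (A x) hinv).comp_continuousWithinAt (hA x hx)

noncomputable def dotProductMulVecCLM (x : m → ℝ) (y : n → ℝ) : Matrix m n ℝ →L[ℝ] ℝ :=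
  LinearMap.toContinuousLinearMap
    { toFun := fun M => x ⬝ᵥ M *ᵥ y
      map_add' := fun A B => by simp only [add_mulVec, dotProduct_add]
      map_smul' := fun c A => by simp [smul_mulVec, dotProduct_smul] }

section Integral

variable {f : ℝ → Matrix m n ℝ} {μ : Measure ℝ} {a b : ℝ}

theorem _root_.IntervalIntegrable.dotProduct_mulVec (hf : IntervalIntegrable f μ a b)
    (x : m → ℝ) (y : n → ℝ) : IntervalIntegrable (fun s => x ⬝ᵥ f s *ᵥ y) μ a b :=
  ⟨(dotProductMulVecCLM x y).integrable_comp hf.1, (dotProductMulVecCLM x y).integrable_comp hf.2⟩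

theorem dotProduct_intervalIntegral_mulVec (hf : IntervalIntegrable f μ a b)
    (x : m → ℝ) (y : n → ℝ) :
    x ⬝ᵥ (∫ s in a..b, f s ∂μ) *ᵥ y = ∫ s in a..b, x ⬝ᵥ f s *ᵥ y ∂μ :=
  ((dotProductMulVecCLM x y).intervalIntegral_comp_comm hf).symm

theorem transpose_intervalIntegral (hf : IntervalIntegrable f μ a b) :
    (∫ s in a..b, f s ∂μ)ᵀ = ∫ s in a..b, (f s)ᵀ ∂μ :=
  ((transposeLinearEquiv m n ℝ ℝ).toLinearMap.toContinuousLinearMap.intervalIntegral_comp_comm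
    hf).symm

theorem isHermitian_intervalIntegral {f : ℝ → Matrix n n ℝ} (hf : IntervalIntegrable f μ a b)
    (hsymm : ∀ s ∈ uIcc a b, (f s).IsHermitian) : (∫ s in a..b, f s ∂μ).IsHermitian := by
  rw [isHermitian_iff_isSymm, IsSymm, transpose_intervalIntegral hf]
  exact integral_congr fun s hs => isHermitian_iff_isSymm.mp (hsymm s hs)

theorem two_mul_dotProduct_intervalIntegral_le {F G H : ℝ → Matrix n n ℝ} (hab : a ≤ b)
    (hF : IntervalIntegrable F μ a b) (hG : IntervalIntegrable G μ a b)
    (hH : IntervalIntegrable H μ a b)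
    (hle : ∀ s ∈ Icc a b, ∀ x y, 2 * (y ⬝ᵥ G s *ᵥ x) ≤ x ⬝ᵥ F s *ᵥ x + y ⬝ᵥ H s *ᵥ y)
    (x y : n → ℝ) :
    2 * (y ⬝ᵥ (∫ s in a..b, G s ∂μ) *ᵥ x) ≤
      x ⬝ᵥ (∫ s in a..b, F s ∂μ) *ᵥ x + y ⬝ᵥ (∫ s in a..b, H s ∂μ) *ᵥ y := by
  have hFx := hF.dotProduct_mulVec x x
  have hHy := hH.dotProduct_mulVec y y
  rw [dotProduct_intervalIntegral_mulVec hF, dotProduct_intervalIntegral_mulVec hG,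
    dotProduct_intervalIntegral_mulVec hH, ← intervalIntegral.integral_const_mul,
    ← intervalIntegral.integral_add hFx hHy]
  exact integral_mono_on hab ((hG.dotProduct_mulVec y x).const_mul 2) (hFx.add hHy)
    fun s hs => hle s hs x y

end Integral

theorem dotProduct_transpose_mul_mul_mulVec (G : Matrix m n ℝ) (Q : Matrix m m ℝ)
    (x y : n → ℝ) : x ⬝ᵥ (Gᵀ * Q * G) *ᵥ y = (G *ᵥ x) ⬝ᵥ Q *ᵥ (G *ᵥ y) := by
  rw [← mulVec_mulVec, ← mulVec_mulVec, dotProduct_mulVec, vecMul_transpose]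

theorem IsHermitian.dotProduct_mulVec_comm {Q : Matrix n n ℝ} (hQ : Q.IsHermitian)
    (u v : n → ℝ) : u ⬝ᵥ Q *ᵥ v = v ⬝ᵥ Q *ᵥ u := by
  conv_lhs => rw [← (isHermitian_iff_isSymm.mp hQ).eq]
  rw [dotProduct_mulVec, vecMul_transpose, dotProduct_comm]

theorem IsHermitian.transpose_mul_mul {Q : Matrix n n ℝ} (hQ : Q.IsHermitian) (G : Matrix n l ℝ) :
    (Gᵀ * Q * G).IsHermitian := by
  simpa only [conjTranspose_eq_transpose_of_trivial] using isHermitian_conjTranspose_mul_mul G hQ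

/-- Completing the square: the difference is `(Q⁻¹u - v) ⬝ᵥ Q (Q⁻¹u - v)`. -/
theorem PosDef.two_mul_dotProduct_le [DecidableEq n] {Q : Matrix n n ℝ} (hQ : Q.PosDef)
    (u v : n → ℝ) : 2 * (v ⬝ᵥ u) ≤ u ⬝ᵥ Q⁻¹ *ᵥ u + v ⬝ᵥ Q *ᵥ v := by
  have hQQinv : Q * Q⁻¹ = 1 := mul_nonsing_inv Q (isUnit_iff_ne_zero.mpr hQ.det_pos.ne')
  have hsq := hQ.posSemidef.dotProduct_mulVec_nonneg (Q⁻¹ *ᵥ u - v)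
  have hcross : v ⬝ᵥ Q *ᵥ (Q⁻¹ *ᵥ u) = v ⬝ᵥ u := by
    rw [mulVec_mulVec, hQQinv, one_mulVec]
  rw [star_trivial, mulVec_sub, dotProduct_sub, sub_dotProduct, sub_dotProduct,
    hQ.isHermitian.dotProduct_mulVec_comm (Q⁻¹ *ᵥ u) v, hcross, mulVec_mulVec, hQQinv,
    one_mulVec, dotProduct_comm (Q⁻¹ *ᵥ u)] at hsq
  linarith

theorem PosDef.two_mul_dotProduct_transpose_mul_le [DecidableEq m] {Q : Matrix m m ℝ}
    (hQ : Q.PosDef) (G : Matrix m n ℝ) (x y : n → ℝ) :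
    2 * (y ⬝ᵥ (Gᵀ * G) *ᵥ x) ≤ x ⬝ᵥ (Gᵀ * Q⁻¹ * G) *ᵥ x + y ⬝ᵥ (Gᵀ * Q * G) *ᵥ y := by
  have hGG : y ⬝ᵥ (Gᵀ * G) *ᵥ x = (G *ᵥ y) ⬝ᵥ (G *ᵥ x) := by
    simpa using dotProduct_transpose_mul_mul_mulVec G 1 y x
  rw [hGG, dotProduct_transpose_mul_mul_mulVec, dotProduct_transpose_mul_mul_mulVec]
  exact hQ.two_mul_dotProduct_le (G *ᵥ x) (G *ᵥ y)

theorem posSemidef_sub_mul_nonsing_inv_mul [DecidableEq n] {N Ψ Ξ : Matrix n n ℝ}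
    (hN : N.IsHermitian) (hΨ : Ψ.IsHermitian) (hΞ : Ξ.IsHermitian)
    (hle : ∀ x y, 2 * (y ⬝ᵥ Ψ *ᵥ x) ≤ x ⬝ᵥ N *ᵥ x + y ⬝ᵥ Ξ *ᵥ y) :
    (N - Ψ * Ξ⁻¹ * Ψ).PosSemidef := by
  have hΨΞΨ : (Ψ * Ξ⁻¹ * Ψ).IsHermitian := by
    simpa only [hΨ.eq] using isHermitian_conjTranspose_mul_mul Ψ hΞ.inv
  refine PosSemidef.of_dotProduct_mulVec_nonneg (hN.sub hΨΞΨ) fun x => ?_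
  rw [star_trivial, sub_mulVec, dotProduct_sub, sub_nonneg]
  -- For singular `Ξ` the junk value `Ξ⁻¹ = 0` reduces the claim to `N ⪰ 0`, the case `y = 0`.
  by_cases hΞdet : IsUnit Ξ.det
  · set y := Ξ⁻¹ *ᵥ Ψ *ᵥ x
    have hΞy : Ξ *ᵥ y = Ψ *ᵥ x := by rw [mulVec_mulVec, mul_nonsing_inv Ξ hΞdet, one_mulVec]
    have hquad : x ⬝ᵥ (Ψ * Ξ⁻¹ * Ψ) *ᵥ x = y ⬝ᵥ Ψ *ᵥ x := by
      rw [← mulVec_mulVec, ← mulVec_mulVec, hΨ.dotProduct_mulVec_comm]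
    have hxy := hle x y
    rw [hΞy, ← hquad] at hxy
    linarith
  · simpa [nonsing_inv_apply_not_isUnit Ξ hΞdet] using hle x 0

end Matrix

theorem continuum_covariance_comparison_general {m k : ℕ} (T : ℝ) (hT : 0 ≤ T)
    (q : ℝ → Matrix (Fin m) (Fin m) ℝ)
    (hqcont : ContinuousOn q (Icc 0 T))
    (hqpos : ∀ s ∈ Icc 0 T, (q s).PosDef)
    (g : ℝ → Matrix (Fin m) (Fin k) ℝ)
    (hgcont : ContinuousOn g (Icc 0 T))
    (Ψ Ξ N : Matrix (Fin k) (Fin k) ℝ)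
    (hΨ : Ψ = ∫ s in (0:ℝ)..T, (g s)ᵀ * g s)
    (hΞ : Ξ = ∫ s in (0:ℝ)..T, (g s)ᵀ * q s * g s)
    (hN : N = ∫ s in (0:ℝ)..T, (g s)ᵀ * (q s)⁻¹ * g s) :
    (N - Ψ * Ξ⁻¹ * Ψ).PosSemidef := by
  have hqinv := hqcont.matrix_inv fun s hs => (hqpos s hs).det_pos.ne'
  have hGG : IntervalIntegrable (fun s => (g s)ᵀ * g s) volume 0 T :=
    ContinuousOn.intervalIntegrable_of_Icc hT (by fun_prop)
  have hGQG : IntervalIntegrable (fun s => (g s)ᵀ * q s * g s) volume 0 T :=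
    ContinuousOn.intervalIntegrable_of_Icc hT (by fun_prop)
  have hGQinvG : IntervalIntegrable (fun s => (g s)ᵀ * (q s)⁻¹ * g s) volume 0 T :=
    ContinuousOn.intervalIntegrable_of_Icc hT (by fun_prop)
  have hqpos_uIcc : ∀ s ∈ uIcc 0 T, (q s).PosDef := uIcc_of_le hT ▸ hqpos
  subst hΨ hΞ hN
  exact posSemidef_sub_mul_nonsing_inv_mul
    (isHermitian_intervalIntegral hGQinvG fun s hs =>
      (hqpos_uIcc s hs).inv.isHermitian.transpose_mul_mul (g s))
    (isHermitian_intervalIntegral hGG fun s _ => by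
      simpa using isHermitian_one.transpose_mul_mul (g s))
    (isHermitian_intervalIntegral hGQG fun s hs =>
      (hqpos_uIcc s hs).isHermitian.transpose_mul_mul (g s))
    (two_mul_dotProduct_intervalIntegral_le hT hGQinvG hGG hGQG fun s hs =>
      (hqpos s hs).two_mul_dotProduct_transpose_mul_le (g s))

/-- Continuum analogue of the SMCE/MCE covariance comparison: with
`Ψ̌ = ∫ gᵀ g`, `Ξ̌ = ∫ gᵀ q g`, `Ň = ∫ gᵀ q⁻¹ g` over `[0,T]`, if `Ψ̌` is invertible then
`Ň − Ψ̌ Ξ̌⁻¹ Ψ̌` is positive semidefinite. -/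
theorem continuum_covariance_comparison {m k : ℕ} (T : ℝ) (hT : 0 ≤ T)
    (q : ℝ → Matrix (Fin m) (Fin m) ℝ)
    (hqcont : ContinuousOn q (Icc 0 T))
    (hqpos : ∀ s ∈ Icc 0 T, (q s).PosDef)
    (g : ℝ → Matrix (Fin m) (Fin k) ℝ)
    (hgcont : ContinuousOn g (Icc 0 T))
    (Ψ Ξ N : Matrix (Fin k) (Fin k) ℝ)
    (hΨ : Ψ = ∫ s in (0:ℝ)..T, (g s)ᵀ * g s)
    (hΞ : Ξ = ∫ s in (0:ℝ)..T, (g s)ᵀ * q s * g s)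
    (hN : N = ∫ s in (0:ℝ)..T, (g s)ᵀ * (q s)⁻¹ * g s)
    (hΨinv : IsUnit Ψ.det) :
    (N - Ψ * Ξ⁻¹ * Ψ).PosSemidef :=
  continuum_covariance_comparison_general T hT q hqcont hqpos g hgcont Ψ Ξ N hΨ hΞ hN
end

section
/- Let f : [0,T] → ℝ^{m×m} and h : [0,T] → ℝ^{m×k} be continuous with f bounded by L, and let Z(t,s) be the fundamental solution of d/dt Z(t,s) = f(t) Z(t,s), Z(s,s) = Id. For a uniform partition t_k = kT/n with Δ = T/n, define d_k := Z(t_k, t_{k−1}) h(t_{k−1}) − h(t_k), where h solves h'(t) = f(t) h(t) + g(t) for a continuous g : [0,T] → ℝ^{m×k}. Then max_k ‖d_k + Δ·g(t_{k−1})‖ = o(Δ) as n → ∞, and hence (1/Δ) Σ_{k=1}^n d_kᵀ d_k → ∫_0^T g(s)ᵀ g(s) ds as n → ∞. -/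
open Matrix Set Filter intervalIntegral
open scoped Topology BigOperators

attribute [local instance] Matrix.frobeniusNormedAddCommGroup Matrix.frobeniusNormedSpace

lemma gronwallBound_le_aux {K ε x : ℝ} (hK : 0 ≤ K) (hε : 0 ≤ ε) (hx : 0 ≤ x) :
    gronwallBound 0 K ε x ≤ ε * x * Real.exp (K * x) := by
  rcases eq_or_lt_of_le hK with h0 | h0
  · rw [← h0]
    simp [gronwallBound_K0]
  · rw [gronwallBound_of_K_ne_0 h0.ne']
    have hy : Real.exp (K * x) - 1 ≤ (K * x) * Real.exp (K * x) := by
      have h1 : 1 - Real.exp (-(K * x)) ≤ K * x := by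
        have := Real.add_one_le_exp (-(K * x))
        linarith
      have h2 := mul_le_mul_of_nonneg_left h1 (Real.exp_pos (K * x)).le
      rw [mul_sub, ← Real.exp_add] at h2
      simpa [mul_comm] using h2
    have : ε / K * (Real.exp (K * x) - 1) ≤ ε / K * ((K * x) * Real.exp (K * x)) :=
      mul_le_mul_of_nonneg_left hy (div_nonneg hε h0.le)
    calc 0 * Real.exp (K * x) + ε / K * (Real.exp (K * x) - 1)
        ≤ ε / K * ((K * x) * Real.exp (K * x)) := by linarith
      _ = ε * x * Real.exp (K * x) := by field_simp

noncomputable def mulRCLM {m k : ℕ} (c : Matrix (Fin m) (Fin k) ℝ) :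
    Matrix (Fin m) (Fin m) ℝ →L[ℝ] Matrix (Fin m) (Fin k) ℝ :=
  LinearMap.toContinuousLinearMap
  { toFun := fun A => A * c
    map_add' := fun A B => Matrix.add_mul A B c
    map_smul' := fun r A => Matrix.smul_mul r A c }

example {m k : ℕ} (c : Matrix (Fin m) (Fin k) ℝ) (A : Matrix (Fin m) (Fin m) ℝ) :
  mulRCLM c A = A * c := rfl

lemma key_est {m k : ℕ} {T L G : ℝ} (hT : 0 < T) (hG : 0 ≤ G)
    {f : ℝ → Matrix (Fin m) (Fin m) ℝ}
    (hfL : ∀ t ∈ Icc 0 T, ‖f t‖ ≤ L)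
    {g : ℝ → Matrix (Fin m) (Fin k) ℝ} (hgG : ∀ t ∈ Icc 0 T, ‖g t‖ ≤ G)
    {Z : ℝ → ℝ → Matrix (Fin m) (Fin m) ℝ}
    (hZinit : ∀ s ∈ Icc 0 T, Z s s = 1)
    (hZode : ∀ s ∈ Icc 0 T, ∀ t ∈ Icc s T,
      HasDerivWithinAt (fun u => Z u s) (f t * Z t s) (Icc s T) t)
    {h : ℝ → Matrix (Fin m) (Fin k) ℝ}
    (hhode : ∀ t ∈ Icc 0 T, HasDerivWithinAt h (f t * h t + g t) (Icc 0 T) t)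
    {s t' : ℝ} (hs0 : 0 ≤ s) (hst : s ≤ t') (ht'T : t' ≤ T)
    {ω : ℝ} (hω : ∀ t ∈ Icc s t', ‖g s - g t‖ ≤ ω) :
    ‖Z t' s * h s - h t' + (t' - s) • g s‖ ≤
      ((t' - s) * max L 0 * G + ω) * (t' - s) * Real.exp (max L 0 * T) := by
  set K := max L 0 with hK
  have hK0 : 0 ≤ K := le_max_right _ _
  have hsT : s ∈ Icc (0:ℝ) T := ⟨hs0, le_trans hst ht'T⟩
  set v : ℝ → Matrix (Fin m) (Fin k) ℝ := fun t => Z t s * h s - h t + (t - s) • g s with hv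
  set v' : ℝ → Matrix (Fin m) (Fin k) ℝ :=
    fun t => (f t * Z t s) * h s - (f t * h t + g t) + g s with hv'
  have hω0 : 0 ≤ ω := le_trans (norm_nonneg (g s - g s)) (hω s ⟨le_rfl, hst⟩)
  -- derivative of v within Icc s t'
  have hderiv : ∀ t ∈ Icc s t', HasDerivWithinAt v (v' t) (Icc s t') t := by
    intro t ht
    have htT : t ∈ Icc s T := ⟨ht.1, le_trans ht.2 ht'T⟩
    have hZ : HasDerivWithinAt (fun u => Z u s) (f t * Z t s) (Icc s t') t :=
      (hZode s hsT t htT).mono (Icc_subset_Icc le_rfl ht'T)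
    have hZc : HasDerivWithinAt (fun u => Z u s * h s) ((f t * Z t s) * h s) (Icc s t') t :=
      ((mulRCLM (h s)).hasFDerivAt.comp_hasDerivWithinAt t hZ)
    have hh : HasDerivWithinAt h (f t * h t + g t) (Icc s t') t :=
      (hhode t ⟨le_trans hs0 ht.1, le_trans ht.2 ht'T⟩).mono (Icc_subset_Icc hs0 ht'T)
    have hlin : HasDerivWithinAt (fun u => (u - s) • g s) (g s) (Icc s t') t := by
      have h' := (((hasDerivWithinAt_id t (Icc s t')).sub_const s).smul_const (g s))
      rw [one_smul] at h'
      exact h'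
    exact (hZc.sub hh).add hlin
  have hcont : ContinuousOn v (Icc s t') := fun t ht => (hderiv t ht).continuousWithinAt
  have hderivI : ∀ x ∈ Ico s t', HasDerivWithinAt v (v' x) (Ici x) x := fun x hx =>
    (hderiv x ⟨hx.1, hx.2.le⟩).mono_of_mem_nhdsWithin (Icc_mem_nhdsGE_of_mem hx)
  have hbound : ∀ x ∈ Ico s t', ‖v' x‖ ≤ K * ‖v x‖ + ((t' - s) * K * G + ω) := by
    intro x hx
    have hxT : x ∈ Icc (0:ℝ) T := ⟨le_trans hs0 hx.1, le_trans hx.2.le ht'T⟩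
    have hfK : ‖f x‖ ≤ K := le_trans (hfL x hxT) (le_max_left _ _)
    have hid : v' x = f x * v x - (x - s) • (f x * g s) + (g s - g x) := by
      simp only [hv, hv', Matrix.mul_sub, Matrix.mul_add, Matrix.mul_smul, mul_smul_comm, Matrix.mul_assoc]
      abel
    rw [hid]
    have h1 : ‖f x * v x‖ ≤ K * ‖v x‖ :=
      le_trans (Matrix.frobenius_norm_mul _ _)
        (mul_le_mul_of_nonneg_right hfK (norm_nonneg _))
    have h2 : ‖(x - s) • (f x * g s)‖ ≤ (t' - s) * K * G := by
      rw [norm_smul, Real.norm_eq_abs, abs_of_nonneg (by linarith [hx.1] : (0:ℝ) ≤ x - s)]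
      have : ‖f x * g s‖ ≤ K * G :=
        le_trans (Matrix.frobenius_norm_mul _ _)
          (mul_le_mul hfK (hgG s hsT) (norm_nonneg _) hK0)
      calc (x - s) * ‖f x * g s‖ ≤ (t' - s) * (K * G) := by
            apply mul_le_mul (by linarith [hx.2]) this (norm_nonneg _) (by linarith)
        _ = (t' - s) * K * G := by ring
    have h3 : ‖g s - g x‖ ≤ ω := hω x ⟨hx.1, hx.2.le⟩
    calc ‖f x * v x - (x - s) • (f x * g s) + (g s - g x)‖
        ≤ ‖f x * v x - (x - s) • (f x * g s)‖ + ‖g s - g x‖ := norm_add_le _ _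
      _ ≤ ‖f x * v x‖ + ‖(x - s) • (f x * g s)‖ + ‖g s - g x‖ := by
            linarith [norm_sub_le (f x * v x) ((x - s) • (f x * g s))]
      _ ≤ K * ‖v x‖ + ((t' - s) * K * G + ω) := by linarith
  have hva : ‖v s‖ ≤ 0 := by
    simp [hv, hZinit s hsT, Matrix.one_mul]
  have := norm_le_gronwallBound_of_norm_deriv_right_le hcont hderivI hva hbound t' ⟨hst, le_rfl⟩
  have hgb : gronwallBound 0 K ((t' - s) * K * G + ω) (t' - s) ≤
      ((t' - s) * K * G + ω) * (t' - s) * Real.exp (K * (t' - s)) :=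
    gronwallBound_le_aux hK0 (add_nonneg (mul_nonneg (mul_nonneg (by linarith) hK0) hG) hω0) (by linarith)
  have hexp : Real.exp (K * (t' - s)) ≤ Real.exp (K * T) :=
    Real.exp_le_exp.2 (mul_le_mul_of_nonneg_left (by linarith) hK0)
  have hfinal : ((t' - s) * K * G + ω) * (t' - s) * Real.exp (K * (t' - s)) ≤
      ((t' - s) * K * G + ω) * (t' - s) * Real.exp (K * T) := by
    exact mul_le_mul_of_nonneg_left hexp
      (mul_nonneg (add_nonneg (mul_nonneg (mul_nonneg (by linarith) hK0) hG) hω0) (by linarith))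
  have : ‖v t'‖ ≤ ((t' - s) * K * G + ω) * (t' - s) * Real.exp (K * T) := by
    linarith [le_trans this (le_trans hgb hfinal)]
  simpa [hv] using this

lemma riemann_sum_tendsto {E : Type*} [NormedAddCommGroup E] [NormedSpace ℝ E] [CompleteSpace E]
    {T : ℝ} (hT : 0 < T) {F : ℝ → E} (hF : ContinuousOn F (Icc 0 T)) :
    Tendsto (fun n : ℕ => (T / n) • ∑ j : Fin n, F ((j : ℝ) * (T / n))) atTop
      (𝓝 (∫ s in (0:ℝ)..T, F s)) := by
  rw [Metric.tendsto_atTop]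
  intro ε hε
  set ε' := ε / (2 * T) with hε'
  have hε'pos : 0 < ε' := by positivity
  obtain ⟨δ, hδ, hδε⟩ := Metric.uniformContinuousOn_iff.1
    (isCompact_Icc.uniformContinuousOn_of_continuous hF) ε' hε'pos
  obtain ⟨N, hN⟩ := exists_nat_gt (T / δ)
  refine ⟨max N 1, fun n hn => ?_⟩
  have hn1 : 1 ≤ n := le_trans (le_max_right N 1) hn
  have hnN : (N : ℝ) ≤ n := Nat.cast_le.2 (le_trans (le_max_left N 1) hn)
  have hnpos : (0:ℝ) < n := by exact_mod_cast hn1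
  set Δ := T / (n:ℝ) with hΔ
  have hΔpos : 0 < Δ := div_pos hT hnpos
  have hΔδ : Δ < δ := by
    rw [hΔ, div_lt_iff₀ hnpos]
    calc T < N * δ := (div_lt_iff₀ hδ).1 hN
      _ ≤ n * δ := mul_le_mul_of_nonneg_right hnN hδ.le
      _ = δ * n := mul_comm _ _
  set a : ℕ → ℝ := fun i => (i : ℝ) * Δ with ha
  have haT : ∀ i ≤ n, a i ∈ Icc (0:ℝ) T := by
    intro i hi
    refine ⟨mul_nonneg (Nat.cast_nonneg i) hΔpos.le, ?_⟩
    rw [ha]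
    calc (i:ℝ) * Δ ≤ n * Δ :=
          mul_le_mul_of_nonneg_right (Nat.cast_le.2 hi) hΔpos.le
      _ = T := by rw [hΔ]; field_simp
  have hstep : ∀ i : ℕ, a (i + 1) - a i = Δ := by
    intro i; rw [ha]; push_cast; ring
  have hint : ∀ i, i < n → IntervalIntegrable F MeasureTheory.volume (a i) (a (i + 1)) := by
    intro i hi
    apply ContinuousOn.intervalIntegrable
    apply hF.mono
    rw [uIcc_of_le (by linarith [hstep i])]
    exact Icc_subset_Icc (haT i hi.le).1 (haT (i+1) hi).2
  have hsplit : ∑ i ∈ Finset.range n, ∫ x in a i..a (i + 1), F x = ∫ x in (0:ℝ)..T, F x := by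
    rw [intervalIntegral.sum_integral_adjacent_intervals hint]
    have h0 : a 0 = 0 := by simp [ha]
    have hTn : a n = T := by rw [ha, hΔ]; field_simp
    rw [h0, hTn]
  have hRS : Δ • ∑ j : Fin n, F ((j : ℝ) * Δ) = ∑ i ∈ Finset.range n, Δ • F (a i) := by
    rw [Fin.sum_univ_eq_sum_range (fun j => F ((j : ℝ) * Δ)) n, Finset.smul_sum]
  have hkey : ∀ i ∈ Finset.range n,
      ‖Δ • F (a i) - ∫ x in a i..a (i + 1), F x‖ ≤ ε' * Δ := by
    intro i hi
    rw [Finset.mem_range] at hi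
    have hconst : ∫ _x in a i..a (i + 1), F (a i) = Δ • F (a i) := by
      rw [intervalIntegral.integral_const, hstep i]
    rw [← hconst, ← intervalIntegral.integral_sub intervalIntegrable_const (hint i hi)]
    have hle : a i ≤ a (i + 1) := by linarith [hstep i]
    have hb : ∀ x ∈ uIoc (a i) (a (i+1)), ‖F (a i) - F x‖ ≤ ε' := by
      intro x hx
      rw [uIoc_of_le hle] at hx
      have hxI : x ∈ Icc (0:ℝ) T :=
        ⟨le_trans (haT i hi.le).1 hx.1.le, le_trans hx.2 (haT (i+1) hi).2⟩
      have hdist : dist (a i) x < δ := by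
        rw [Real.dist_eq, abs_of_nonpos (by linarith [hx.1])]
        have hxu : x ≤ a i + Δ := by linarith [hstep i, hx.2]
        linarith
      have := hδε (a i) (haT i hi.le) x hxI hdist
      rw [dist_eq_norm] at this
      exact this.le
    calc ‖∫ x in a i..a (i+1), (F (a i) - F x)‖ ≤ ε' * |a (i+1) - a i| :=
          intervalIntegral.norm_integral_le_of_norm_le_const hb
      _ = ε' * Δ := by rw [hstep i, abs_of_pos hΔpos]
  have hsum : ‖Δ • ∑ j : Fin n, F ((j : ℝ) * Δ) - ∫ s in (0:ℝ)..T, F s‖ ≤ ε' * T := by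
    rw [hRS, ← hsplit, ← Finset.sum_sub_distrib]
    calc ‖∑ i ∈ Finset.range n, (Δ • F (a i) - ∫ x in a i..a (i + 1), F x)‖
        ≤ ∑ i ∈ Finset.range n, ‖Δ • F (a i) - ∫ x in a i..a (i + 1), F x‖ :=
          norm_sum_le _ _
      _ ≤ ∑ _i ∈ Finset.range n, ε' * Δ := Finset.sum_le_sum hkey
      _ = n * (ε' * Δ) := by rw [Finset.sum_const, Finset.card_range, nsmul_eq_mul]
      _ = ε' * T := by rw [hΔ]; field_simp
  rw [dist_eq_norm]
  have hfin : ε' * T = ε / 2 := by rw [hε']; field_simp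
  calc ‖Δ • ∑ j : Fin n, F ((j : ℝ) * Δ) - ∫ s in (0:ℝ)..T, F s‖ ≤ ε' * T := hsum
    _ < ε := by linarith [hfin]

lemma term_aux {m k : ℕ} (dd gj : Matrix (Fin m) (Fin k) ℝ) {c ρ μ G : ℝ}
    (hc : 0 ≤ c) (hρ : 0 ≤ ρ) (hρc : ρ * (c * c) = c)
    (hμ : ‖dd + c • gj‖ ≤ μ) (hG0 : 0 ≤ G) (hGb : ‖gj‖ ≤ G) :
    ‖ρ • (ddᵀ * dd) - c • (gjᵀ * gj)‖ ≤ ρ * (μ * μ + 2 * c * μ * G) := by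
  have hμ0 : 0 ≤ μ := le_trans (norm_nonneg _) hμ
  have hexp : ddᵀ * dd = (dd + c • gj)ᵀ * (dd + c • gj) - c • ((dd + c • gj)ᵀ * gj)
      - c • (gjᵀ * (dd + c • gj)) + (c * c) • (gjᵀ * gj) := by
    simp only [Matrix.transpose_add, Matrix.transpose_smul, Matrix.add_mul, Matrix.mul_add,
      Matrix.smul_mul, Matrix.mul_smul, smul_smul, smul_add, smul_sub]
    abel
  have hLHS : ρ • (ddᵀ * dd) - c • (gjᵀ * gj)
      = ρ • ((dd + c • gj)ᵀ * (dd + c • gj) - c • ((dd + c • gj)ᵀ * gj)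
          - c • (gjᵀ * (dd + c • gj))) := by
    rw [hexp]
    simp only [smul_sub, smul_add, smul_smul, hρc]
    abel
  rw [hLHS, norm_smul, Real.norm_eq_abs, abs_of_nonneg hρ]
  apply mul_le_mul_of_nonneg_left _ hρ
  have h1 : ‖(dd + c • gj)ᵀ * (dd + c • gj)‖ ≤ μ * μ := by
    refine le_trans (Matrix.frobenius_norm_mul _ _) ?_
    rw [Matrix.frobenius_norm_transpose]
    exact mul_le_mul hμ hμ (norm_nonneg _) hμ0
  have h2 : ‖c • ((dd + c • gj)ᵀ * gj)‖ ≤ c * (μ * G) := by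
    rw [norm_smul, Real.norm_eq_abs, abs_of_nonneg hc]
    refine mul_le_mul_of_nonneg_left ?_ hc
    refine le_trans (Matrix.frobenius_norm_mul _ _) ?_
    rw [Matrix.frobenius_norm_transpose]
    exact mul_le_mul hμ hGb (norm_nonneg _) hμ0
  have h3 : ‖c • (gjᵀ * (dd + c • gj))‖ ≤ c * (G * μ) := by
    rw [norm_smul, Real.norm_eq_abs, abs_of_nonneg hc]
    refine mul_le_mul_of_nonneg_left ?_ hc
    refine le_trans (Matrix.frobenius_norm_mul _ _) ?_
    rw [Matrix.frobenius_norm_transpose]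
    exact mul_le_mul hGb hμ (norm_nonneg _) hG0
  calc ‖(dd + c • gj)ᵀ * (dd + c • gj) - c • ((dd + c • gj)ᵀ * gj)
        - c • (gjᵀ * (dd + c • gj))‖
      ≤ ‖(dd + c • gj)ᵀ * (dd + c • gj) - c • ((dd + c • gj)ᵀ * gj)‖
        + ‖c • (gjᵀ * (dd + c • gj))‖ := norm_sub_le _ _
    _ ≤ ‖(dd + c • gj)ᵀ * (dd + c • gj)‖ + ‖c • ((dd + c • gj)ᵀ * gj)‖
        + ‖c • (gjᵀ * (dd + c • gj))‖ := by
          linarith [norm_sub_le ((dd + c • gj)ᵀ * (dd + c • gj)) (c • ((dd + c • gj)ᵀ * gj))]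
    _ ≤ μ * μ + 2 * c * μ * G := by linarith

set_option maxHeartbeats 2000000 in
/-- For the fundamental solution `Z` of `Z' = f Z` and `h` solving
`h' = f h + g`, the weighted differences `d_k = Z(t_k,t_{k−1}) h(t_{k−1}) − h(t_k)` over a
uniform partition satisfy `max_k ‖d_k + Δ g(t_{k−1})‖ = o(Δ)`, and hence
`(1/Δ) Σ_k d_kᵀ d_k → ∫_0^T gᵀ g`. -/
theorem fisher_information_limit {m k : ℕ} (T L : ℝ) (hT : 0 < T)
    (f : ℝ → Matrix (Fin m) (Fin m) ℝ) (hf : ContinuousOn f (Icc 0 T))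
    (hfL : ∀ t ∈ Icc 0 T, ‖f t‖ ≤ L)
    (g : ℝ → Matrix (Fin m) (Fin k) ℝ) (hg : ContinuousOn g (Icc 0 T))
    (Z : ℝ → ℝ → Matrix (Fin m) (Fin m) ℝ)
    (hZinit : ∀ s ∈ Icc 0 T, Z s s = 1)
    (hZode : ∀ s ∈ Icc 0 T, ∀ t ∈ Icc s T,
      HasDerivWithinAt (fun u => Z u s) (f t * Z t s) (Icc s T) t)
    (h : ℝ → Matrix (Fin m) (Fin k) ℝ)
    (hhode : ∀ t ∈ Icc 0 T, HasDerivWithinAt h (f t * h t + g t) (Icc 0 T) t)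
    (d : (n : ℕ) → Fin n → Matrix (Fin m) (Fin k) ℝ)
    (hd : ∀ (n : ℕ) (j : Fin n),
      d n j = Z (((j : ℝ) + 1) * (T / n)) ((j : ℝ) * (T / n)) * h ((j : ℝ) * (T / n)) -
        h (((j : ℝ) + 1) * (T / n))) :
    Tendsto (fun n : ℕ =>
        ((n : ℝ) / T) * ⨆ j : Fin n, ‖d n j + (T / n) • g ((j : ℝ) * (T / n))‖)
      atTop (𝓝 0) ∧
    Tendsto (fun n : ℕ => ((n : ℝ) / T) • ∑ j : Fin n, (d n j)ᵀ * d n j)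
      atTop (𝓝 (∫ s in (0:ℝ)..T, (g s)ᵀ * g s)) := by
  obtain ⟨G₀, hG₀⟩ := isCompact_Icc.exists_bound_of_continuousOn hg
  have hG : (0:ℝ) ≤ max G₀ 0 := le_max_right _ _
  have hgG : ∀ t ∈ Icc (0:ℝ) T, ‖g t‖ ≤ max G₀ 0 := fun t ht =>
    le_trans (hG₀ t ht) (le_max_left _ _)
  set G := max G₀ 0 with hGdef
  set K := max L 0 with hKdef
  have hK0 : (0:ℝ) ≤ K := le_max_right _ _
  set E := Real.exp (K * T) with hEdef
  have hEpos : 0 < E := Real.exp_pos _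
  set A : ℕ → ℝ := fun n =>
    ((n : ℝ) / T) * ⨆ j : Fin n, ‖d n j + (T / n) • g ((j : ℝ) * (T / n))‖ with hAdef
  -- the pointwise estimate
  have hjbound : ∀ (n : ℕ), 1 ≤ n → ∀ (j : Fin n), ∀ ω : ℝ,
      (∀ t ∈ Icc ((j:ℝ)*(T/n)) (((j:ℝ)+1)*(T/n)), ‖g ((j:ℝ)*(T/n)) - g t‖ ≤ ω) →
      ‖d n j + (T/n) • g ((j:ℝ)*(T/n))‖ ≤ ((T/n) * K * G + ω) * (T/n) * E := by
    intro n hn j ω hω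
    have hnpos : (0:ℝ) < n := by exact_mod_cast hn
    have hΔpos : 0 < T/n := div_pos hT hnpos
    have hs0 : 0 ≤ (j:ℝ)*(T/n) := mul_nonneg (by positivity) hΔpos.le
    have hst : (j:ℝ)*(T/n) ≤ ((j:ℝ)+1)*(T/n) := by nlinarith [hΔpos]
    have hj1 : (j:ℝ) + 1 ≤ n := by
      have := j.isLt
      exact_mod_cast Nat.cast_le.2 (Nat.succ_le_of_lt this)
    have ht'T : ((j:ℝ)+1)*(T/n) ≤ T := by
      calc ((j:ℝ)+1)*(T/n) ≤ n * (T/n) := mul_le_mul_of_nonneg_right hj1 hΔpos.le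
        _ = T := by field_simp
    have hke := key_est hT hG hfL hgG hZinit hZode hhode hs0 hst ht'T hω
    have hts : ((j:ℝ)+1)*(T/n) - (j:ℝ)*(T/n) = T/n := by ring
    rw [hts] at hke
    rw [hd n j]
    exact hke
  -- nonnegativity of A
  have hA0 : ∀ n, 0 ≤ A n := by
    intro n
    apply mul_nonneg (by positivity)
    exact Real.iSup_nonneg fun j => norm_nonneg _
  -- Part 1
  have part1 : Tendsto A atTop (𝓝 0) := by
    rw [Metric.tendsto_atTop]
    intro ε hε
    set ε₁ := ε / (2 * E) with hε₁
    have hε₁pos : 0 < ε₁ := by positivity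
    obtain ⟨δ, hδ, hδε⟩ := Metric.uniformContinuousOn_iff.1
      (isCompact_Icc.uniformContinuousOn_of_continuous hg) ε₁ hε₁pos
    obtain ⟨N, hN⟩ := exists_nat_gt (max (T / δ) (2 * T * K * G * E / ε))
    refine ⟨max N 1, fun n hn => ?_⟩
    have hn1 : 1 ≤ n := le_trans (le_max_right N 1) hn
    have hnN : (N : ℝ) ≤ n := Nat.cast_le.2 (le_trans (le_max_left N 1) hn)
    have hnpos : (0:ℝ) < n := by exact_mod_cast hn1
    have hΔpos : 0 < T/n := div_pos hT hnpos
    have hΔδ : T/n < δ := by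
      rw [div_lt_iff₀ hnpos]
      have h1 : T / δ < (n:ℝ) :=
        lt_of_le_of_lt (le_max_left _ _) (lt_of_lt_of_le hN hnN)
      calc T < n * δ := (div_lt_iff₀ hδ).1 h1
        _ = δ * n := mul_comm _ _
    haveI : Nonempty (Fin n) := ⟨⟨0, hn1⟩⟩
    -- oscillation bound on each subinterval
    have hsup : (⨆ j : Fin n, ‖d n j + (T/n) • g ((j:ℝ)*(T/n))‖) ≤
        ((T/n) * K * G + ε₁) * (T/n) * E := by
      apply ciSup_le
      intro j
      apply hjbound n hn1 j ε₁
      intro t ht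
      have hnj1 : (j:ℝ) + 1 ≤ n := by
        exact_mod_cast Nat.cast_le.2 (Nat.succ_le_of_lt j.isLt)
      have hnT : (n:ℝ) * (T/n) = T := by field_simp
      have hjn : (j:ℝ) ≤ (n:ℝ) := by linarith
      have h1 : (j:ℝ)*(T/n) ≤ (n:ℝ)*(T/n) :=
        mul_le_mul_of_nonneg_right hjn hΔpos.le
      have h2 : ((j:ℝ)+1)*(T/n) ≤ (n:ℝ)*(T/n) :=
        mul_le_mul_of_nonneg_right hnj1 hΔpos.le
      rw [hnT] at h1 h2
      have hsI : (j:ℝ)*(T/n) ∈ Icc (0:ℝ) T := ⟨mul_nonneg (by positivity) hΔpos.le, h1⟩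
      have htI : t ∈ Icc (0:ℝ) T := ⟨le_trans hsI.1 ht.1, le_trans ht.2 h2⟩
      have hdist : dist ((j:ℝ)*(T/n)) t < δ := by
        rw [Real.dist_eq, abs_of_nonpos (by linarith [ht.1])]
        have ht2 : t ≤ (j:ℝ)*(T/n) + T/n := by nlinarith [ht.2]
        linarith
      have := hδε _ hsI t htI hdist
      rw [dist_eq_norm] at this
      exact this.le
    have hAn : A n ≤ (T/n) * K * G * E + ε₁ * E := by
      simp only [hAdef]
      calc ((n : ℝ) / T) * ⨆ j : Fin n, ‖d n j + (T / n) • g ((j : ℝ) * (T / n))‖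
          ≤ ((n : ℝ) / T) * (((T/n) * K * G + ε₁) * (T/n) * E) := by
            apply mul_le_mul_of_nonneg_left hsup (by positivity)
        _ = (T/n) * K * G * E + ε₁ * E := by field_simp
    have hε₁E : ε₁ * E = ε / 2 := by rw [hε₁]; field_simp
    have hsmall : (T/n) * K * G * E < ε / 2 := by
      have h2 : 2 * T * K * G * E / ε < (n:ℝ) :=
        lt_of_le_of_lt (le_max_right _ _) (lt_of_lt_of_le hN hnN)
      rw [div_lt_iff₀ hε] at h2
      rw [div_mul_eq_mul_div, div_mul_eq_mul_div, div_mul_eq_mul_div, div_lt_iff₀ hnpos]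
      nlinarith
    rw [Real.dist_eq, sub_zero, abs_of_nonneg (hA0 n)]
    linarith
  refine ⟨part1, ?_⟩
  -- Part 2
  have hFcont : ContinuousOn (fun s => (g s)ᵀ * g s) (Icc 0 T) := by
    have hc : Continuous (fun A : Matrix (Fin m) (Fin k) ℝ => Aᵀ * A) :=
      (continuous_id.matrix_transpose).matrix_mul continuous_id
    exact hc.comp_continuousOn hg
  have hR := riemann_sum_tendsto hT hFcont
  have herr : ∀ n : ℕ, 1 ≤ n →
      ‖((n:ℝ)/T) • ∑ j : Fin n, (d n j)ᵀ * d n j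
        - (T/(n:ℝ)) • ∑ j : Fin n, (g ((j:ℝ)*(T/n)))ᵀ * g ((j:ℝ)*(T/n))‖
      ≤ T * (A n * A n) + 2*T*G * A n := by
    intro n hn
    have hnpos : (0:ℝ) < n := by exact_mod_cast hn
    have hΔpos : 0 < T/(n:ℝ) := div_pos hT hnpos
    haveI : Nonempty (Fin n) := ⟨⟨0, hn⟩⟩
    have hμ0 : 0 ≤ (T/(n:ℝ)) * A n := mul_nonneg hΔpos.le (hA0 n)
    have hsup_eq : (⨆ j : Fin n, ‖d n j + (T/(n:ℝ)) • g ((j:ℝ)*(T/n))‖) = (T/(n:ℝ)) * A n := by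
      simp only [hAdef]
      field_simp
    have he : ∀ j : Fin n, ‖d n j + (T/(n:ℝ)) • g ((j:ℝ)*(T/n))‖ ≤ (T/(n:ℝ)) * A n := by
      intro j
      rw [← hsup_eq]
      exact le_ciSup (f := fun j : Fin n => ‖d n j + (T/(n:ℝ)) • g ((j:ℝ)*(T/n))‖)
        (Set.Finite.bddAbove (Set.finite_range _)) j
    have hterm : ∀ j : Fin n,
        ‖((n:ℝ)/T) • ((d n j)ᵀ * d n j)
          - (T/(n:ℝ)) • ((g ((j:ℝ)*(T/n)))ᵀ * g ((j:ℝ)*(T/n)))‖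
        ≤ ((n:ℝ)/T) * (((T/(n:ℝ)) * A n) * ((T/(n:ℝ)) * A n)
            + 2*(T/(n:ℝ))*((T/(n:ℝ)) * A n)*G) := by
      intro j
      have hgjG : ‖g ((j:ℝ)*(T/n))‖ ≤ G := by
        apply hgG
        have hjn : (j:ℝ) ≤ (n:ℝ) := by
          have h0 := j.isLt
          have h0' : (j:ℝ) < (n:ℝ) := by exact_mod_cast h0
          linarith
        have hnT : (n:ℝ)*(T/n) = T := by field_simp
        have h1 : (j:ℝ)*(T/n) ≤ (n:ℝ)*(T/n) := mul_le_mul_of_nonneg_right hjn hΔpos.le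
        rw [hnT] at h1
        exact ⟨mul_nonneg (by positivity) hΔpos.le, h1⟩
      exact term_aux (d n j) (g ((j:ℝ)*(T/n))) hΔpos.le (by positivity)
        (by field_simp) (he j) hG hgjG
    calc ‖((n:ℝ)/T) • ∑ j : Fin n, (d n j)ᵀ * d n j
          - (T/(n:ℝ)) • ∑ j : Fin n, (g ((j:ℝ)*(T/n)))ᵀ * g ((j:ℝ)*(T/n))‖
        = ‖∑ j : Fin n, (((n:ℝ)/T) • ((d n j)ᵀ * d n j)
            - (T/(n:ℝ)) • ((g ((j:ℝ)*(T/n)))ᵀ * g ((j:ℝ)*(T/n))))‖ := by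
          rw [Finset.sum_sub_distrib, ← Finset.smul_sum, ← Finset.smul_sum]
      _ ≤ ∑ j : Fin n, ‖((n:ℝ)/T) • ((d n j)ᵀ * d n j)
            - (T/(n:ℝ)) • ((g ((j:ℝ)*(T/n)))ᵀ * g ((j:ℝ)*(T/n)))‖ := norm_sum_le _ _
      _ ≤ ∑ _j : Fin n, ((n:ℝ)/T) * (((T/(n:ℝ)) * A n) * ((T/(n:ℝ)) * A n)
            + 2*(T/(n:ℝ))*((T/(n:ℝ)) * A n)*G) := Finset.sum_le_sum fun j _ => hterm j
      _ = (n:ℝ) * (((n:ℝ)/T) * (((T/(n:ℝ)) * A n) * ((T/(n:ℝ)) * A n)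
            + 2*(T/(n:ℝ))*((T/(n:ℝ)) * A n)*G)) := by
          rw [Finset.sum_const, Finset.card_univ, Fintype.card_fin, nsmul_eq_mul]
      _ = T * (A n * A n) + 2*T*G * A n := by field_simp
  have hbnd : Tendsto (fun n : ℕ => T * (A n * A n) + 2*T*G * A n) atTop (𝓝 0) := by
    have := ((part1.mul part1).const_mul T).add (part1.const_mul (2*T*G))
    simpa using this
  have herr' : Tendsto (fun n : ℕ => ((n:ℝ)/T) • ∑ j : Fin n, (d n j)ᵀ * d n j
      - (T/(n:ℝ)) • ∑ j : Fin n, (g ((j:ℝ)*(T/n)))ᵀ * g ((j:ℝ)*(T/n))) atTop (𝓝 0) := by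
    apply squeeze_zero_norm' _ hbnd
    filter_upwards [eventually_ge_atTop 1] with n hn
    exact herr n hn
  have hfinal := herr'.add hR
  simp only [sub_add_cancel, zero_add] at hfinal
  exact hfinal
end
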